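/- In the 6-state turn-based game with uniform observation from Figure 1 of the paper, agent a₁ has a compatible memoryless strategy ensuring F f from q₀ (namely playing move m₁ at both q₂ and q₃), but there is no compatible memoryless strategy ensuring XXX f from q₀, whereas a compatible history-dependent strategy ensuring XXX f from q₀ exists. -/

import Mathlib

/-!
Agent a₁ only ever chooses at the `P`-states q₂ and q₃, which it cannot tell apart, and the
moves at q₄, q₅ are irrelevant; so a compatible memoryless strategy acts on outcomes like one
constant move m. Against m = m₁ every play reaches f by time 4, but a₂ can go q₀ q₁ q₃ q₂ and
be at q₂ at time 3; against any other m, a₂ can go q₀ q₂ q₄ and stay in q₄. With memory, a₁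
can tell the history q₀ q₁ q₃ (observed ¬P ¬P P) from q₀ q₃ q₂ and plays m₂ there only.
-/

def FPath (Q : Type*) := {l : List Q // l ≠ []}

def PathEquiv {Q : Type*} (r : Q → Q → Prop) (ρ ρ' : FPath Q) : Prop :=
  ρ.1.length = ρ'.1.length ∧
    ∀ (i : ℕ) (h : i < ρ.1.length) (h' : i < ρ'.1.length),
      r (ρ.1.get ⟨i, h⟩) (ρ'.1.get ⟨i, h'⟩)

def CompatStrat {Q M : Type*} (r : Q → Q → Prop) (f : FPath Q → M) : Prop :=
  ∀ ρ ρ', PathEquiv r ρ ρ' → f ρ = f ρ'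

def FPath.lastSt {Q : Type*} (ρ : FPath Q) : Q := ρ.1.getLast ρ.2

/-- A strategy is memoryless if its value depends only on the last state. -/
def Memoryless {Q M : Type*} (f : FPath Q → M) : Prop :=
  ∀ ρ ρ', ρ.lastSt = ρ'.lastSt → f ρ = f ρ'

def prefixPath {Q : Type*} (ρ : ℕ → Q) (n : ℕ) : FPath Q :=
  ⟨List.ofFn (fun i : Fin (n + 1) => ρ i), by simp⟩

/-- Label `P`: holds exactly at states `q₂` and `q₃`. -/
def labP16 (q : Fin 6) : Prop := q = 2 ∨ q = 3

/-- The uniform observation relation `≡_P`: two states are equivalent iff they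
agree on `P`. -/
def obs16 (q q' : Fin 6) : Prop := labP16 q ↔ labP16 q'

/-- Owner map: agent `a₂` (here `1`) owns `q₀, q₁`; agent `a₁` (here `0`) owns the
other states. -/
def own16 (q : Fin 6) : Fin 2 := if q = 0 ∨ q = 1 then 1 else 0

/-- Transition function of the turn-based game of Figure 1 (moves `0,1,2` standing
for `m₁,m₂,m₃`; the move of the owner determines the successor). -/
def edg16 (q : Fin 6) (m : Fin 3) : Fin 6 :=
  if q = 0 then (if m = 0 then 1 else if m = 1 then 3 else 2)
  else if q = 1 then 3
  else if q = 2 then (if m = 0 then 5 else 4)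
  else if q = 3 then (if m = 0 then 2 else 5)
  else q

/-- Outcomes from `q₀` when agent `a₁` follows strategy `f` and agent `a₂` plays
arbitrarily. -/
def out16 (f : FPath (Fin 6) → Fin 3) : Set (ℕ → Fin 6) :=
  {ρ | ρ 0 = 0 ∧ ∀ n,
    if own16 (ρ n) = 0 then ρ (n + 1) = edg16 (ρ n) (f (prefixPath ρ n))
    else ∃ m, ρ (n + 1) = edg16 (ρ n) m}

instance : DecidablePred labP16 := fun q => inferInstanceAs (Decidable (q = 2 ∨ q = 3))

section Strategies

variable {Q M : Type*}

theorem FPath.lastSt_prefixPath (ρ : ℕ → Q) (n : ℕ) : (prefixPath ρ n).lastSt = ρ n := by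
  rw [FPath.lastSt, List.getLast_eq_getElem]
  simp only [prefixPath, List.length_ofFn, List.getElem_ofFn]
  rfl

theorem prefixPath_zero_coe (ρ : ℕ → Q) : (prefixPath ρ 0).1 = [ρ 0] := rfl

theorem prefixPath_succ_coe (ρ : ℕ → Q) (n : ℕ) :
    (prefixPath ρ (n + 1)).1 = (prefixPath ρ n).1 ++ [ρ (n + 1)] := by
  simp only [prefixPath, List.ofFn_succ_last]
  rfl

theorem compatStrat_comp_map {α : Type*} {r : Q → Q → Prop} (L : Q → α)
    (hL : ∀ q q', r q q' → L q = L q') (g : List α → M) :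
    CompatStrat r fun ρ => g (ρ.1.map L) := by
  rintro ρ ρ' ⟨hlen, hrel⟩
  refine congrArg g (List.ext_getElem (by simp [hlen]) fun i h h' => ?_)
  simp only [List.getElem_map]
  exact hL _ _ (hrel i (by simpa using h) (by simpa using h'))

theorem Memoryless.eq_of_rel_lastSt {r : Q → Q → Prop} {f : FPath Q → M} (hmem : Memoryless f)
    (hcomp : CompatStrat r f) {ρ ρ' : FPath Q} (h : r ρ.lastSt ρ'.lastSt) : f ρ = f ρ' :=
  calc f ρ = f ⟨[ρ.lastSt], List.cons_ne_nil _ _⟩ := hmem _ _ rfl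
    _ = f ⟨[ρ'.lastSt], List.cons_ne_nil _ _⟩ := hcomp _ _ ⟨rfl, fun | 0, _, _ => h⟩
    _ = f ρ' := hmem _ _ rfl

end Strategies

section Figure1

variable {f g : FPath (Fin 6) → Fin 3} {ρ : ℕ → Fin 6}

theorem edg16_congr {q : Fin 6} {a b : Fin 3} (hq : own16 q = 0) (h : labP16 q → a = b) :
    edg16 q a = edg16 q b := by
  revert q a b
  decide

theorem out16_congr (h : ∀ ρ, labP16 ρ.lastSt → f ρ = g ρ) : out16 f = out16 g := by
  ext ρ
  refine and_congr_right fun _ => forall_congr' fun n => ?_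
  split_ifs with hq
  · rw [edg16_congr hq fun hP => h _ (by rwa [FPath.lastSt_prefixPath])]
  · rfl

theorem Memoryless.exists_out16_eq_const (hmem : Memoryless f) (hcomp : CompatStrat obs16 f) :
    ∃ m, out16 f = out16 fun _ => m :=
  ⟨f ⟨[3], List.cons_ne_nil _ _⟩, out16_congr fun _ hP =>
    hmem.eq_of_rel_lastSt hcomp (iff_of_true hP (Or.inr rfl))⟩

theorem out16_succ (hρ : ρ ∈ out16 f) {n : ℕ} {q : Fin 6} (hn : ρ n = q) (hq : own16 q = 0) :
    ρ (n + 1) = edg16 q (f (prefixPath ρ n)) := by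
  have := hρ.2 n
  rwa [hn, if_pos hq] at this

theorem out16_cases (hρ : ρ ∈ out16 f) : (ρ 1 = 1 ∧ ρ 2 = 3) ∨ ρ 1 = 3 ∨ ρ 1 = 2 := by
  obtain ⟨h0, hstep⟩ := hρ
  have h1 := hstep 0
  rw [h0, if_neg (by decide)] at h1
  obtain ⟨m, hm⟩ := h1
  fin_cases m
  · have h2 := hstep 1
    rw [hm, if_neg (by decide)] at h2
    obtain ⟨m', hm'⟩ := h2
    exact Or.inl ⟨hm, hm'.trans (by fin_cases m' <;> rfl)⟩
  · exact Or.inr (Or.inl hm)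
  · exact Or.inr (Or.inr hm)

theorem apply_four_of_mem_out16_zero (hρ : ρ ∈ out16 fun _ => 0) : ρ 4 = 5 := by
  have step := @out16_succ _ _ hρ
  rcases out16_cases hρ with ⟨-, h2⟩ | h1 | h1
  · exact step (step h2 (by decide)) (by decide)
  · exact step (step (step h1 (by decide)) (by decide)) (by decide)
  · exact step (step (step h1 (by decide)) (by decide)) (by decide)

theorem exists_mem_out16_const_apply_three_ne (m : Fin 3) :
    ∃ ρ ∈ out16 fun _ => m, ρ 3 ≠ 5 := by
  by_cases hm : m = 0
  · subst hm
    refine ⟨fun n => [0, 1, 3, 2].getD n 5, ⟨rfl, fun n => ?_⟩, by decide⟩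
    match n with
    | 0 | 1 | 2 | 3 => decide
    | k + 4 => simp only [List.getD_cons_succ, List.getD_nil]; decide
  · refine ⟨fun n => [0, 2].getD n 4, ⟨rfl, fun n => ?_⟩, by decide⟩
    match n with
    | 0 | 1 => revert m; decide
    | k + 2 => simp only [List.getD_cons_succ, List.getD_nil]; revert m; decide

def histStrat16 (ρ : FPath (Fin 6)) : Fin 3 :=
  if ρ.1.map (fun q => decide (labP16 q)) = [false, false, true] then 1 else 0

theorem compatStrat_histStrat16 : CompatStrat obs16 histStrat16 :=
  compatStrat_comp_map (fun q => decide (labP16 q)) (fun _ _ h => decide_eq_decide.mpr h)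
    fun l => if l = [false, false, true] then 1 else 0

theorem apply_three_of_mem_out16_histStrat16 (hρ : ρ ∈ out16 histStrat16) : ρ 3 = 5 := by
  have step := @out16_succ _ _ hρ
  rcases out16_cases hρ with ⟨h1, h2⟩ | h1 | h1
  · rw [step h2 (by decide)]
    simp only [histStrat16, prefixPath_succ_coe, prefixPath_zero_coe, hρ.1, h1, h2]
    decide
  · have h2 : ρ 2 = 2 := by
      rw [step h1 (by decide)]
      simp only [histStrat16, prefixPath_succ_coe, prefixPath_zero_coe, hρ.1, h1]
      decide
    rw [step h2 (by decide)]
    simp only [histStrat16, prefixPath_succ_coe, prefixPath_zero_coe, hρ.1, h1, h2]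
    decide
  · have h2 : ρ 2 = 5 := by
      rw [step h1 (by decide)]
      simp only [histStrat16, prefixPath_succ_coe, prefixPath_zero_coe, hρ.1, h1]
      decide
    exact step h2 (by decide)

end Figure1

/-- In the game of Figure 1: agent `a₁` has a compatible memoryless strategy
ensuring `F f` from `q₀` (namely playing `m₁` at `q₂` and `q₃`); no compatible
memoryless strategy ensures `XXX f` from `q₀`; but a compatible history-dependent
strategy ensuring `XXX f` from `q₀` exists. -/
theorem figure1_game_properties :
    (∃ f : FPath (Fin 6) → Fin 3, Memoryless f ∧ CompatStrat obs16 f ∧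
      (∀ ρ, (ρ.lastSt = 2 ∨ ρ.lastSt = 3) → f ρ = 0) ∧
      ∀ ρ ∈ out16 f, ∃ n, ρ n = 5) ∧
    (¬ ∃ f : FPath (Fin 6) → Fin 3, Memoryless f ∧ CompatStrat obs16 f ∧
      ∀ ρ ∈ out16 f, ρ 3 = 5) ∧
    (∃ f : FPath (Fin 6) → Fin 3, CompatStrat obs16 f ∧
      ∀ ρ ∈ out16 f, ρ 3 = 5) := by
  refine ⟨⟨fun _ => 0, fun _ _ _ => rfl, fun _ _ _ => rfl, fun _ _ => rfl,
      fun _ hρ => ⟨4, apply_four_of_mem_out16_zero hρ⟩⟩, ?_,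
    ⟨histStrat16, compatStrat_histStrat16, fun _ => apply_three_of_mem_out16_histStrat16⟩⟩
  rintro ⟨f, hmem, hcomp, hwin⟩
  obtain ⟨m, hm⟩ := hmem.exists_out16_eq_const hcomp
  obtain ⟨ρ, hρ, h3⟩ := exists_mem_out16_const_apply_three_ne m
  exact h3 (hwin ρ (hm ▸ hρ))
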